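/- arXiv:2511.11566 — 2 statements merged into one kernel-verified Lean document; each statement's English description precedes it below -/
import Mathlib

section
/- For every r ∈ ℝ one has r·e^{r²/2}·ξ(r) + √(2/π) > 0, where ξ(r) = erf(r/√2) + 1. Consequently, for a ∈ ℝ, M > a and any r ∈ ℝ, the quantity σ(M,r) = (M − a)·e^{r²/2}·ξ(r) / (r·e^{r²/2}·ξ(r) + √(2/π)) is a well-defined positive real number, and the left-truncated Gaussian distribution on [a, ∞) with parameters μ = r·σ(M,r) + a and σ = σ(M,r) has mean exactly M. -/
open MeasureTheory Real Filter Set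

/-- The error function. -/
noncomputable def erf (x : ℝ) : ℝ :=
  (2 / Real.sqrt Real.pi) * ∫ t in (0:ℝ)..x, Real.exp (-t ^ 2)

/-- `ξ(r) = erf(r/√2) + 1`. -/
noncomputable def xi (r : ℝ) : ℝ := erf (r / Real.sqrt 2) + 1

/-- Normalizing constant of the left-truncated Gaussian on `[a, ∞)` with parameters `μ, σ`. -/
noncomputable def lZ (a μ σ : ℝ) : ℝ :=
  ∫ x in Set.Ici a, Real.exp (-(x - μ) ^ 2 / (2 * σ ^ 2))

/-- Mean of the left-truncated Gaussian on `[a, ∞)` with parameters `μ, σ`. -/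
noncomputable def lMean (a μ σ : ℝ) : ℝ :=
  (∫ x in Set.Ici a, x * Real.exp (-(x - μ) ^ 2 / (2 * σ ^ 2))) / lZ a μ σ

/-- Variance of the left-truncated Gaussian on `[a, ∞)` with parameters `μ, σ`. -/
noncomputable def lVar (a μ σ : ℝ) : ℝ :=
  (∫ x in Set.Ici a, (x - lMean a μ σ) ^ 2 * Real.exp (-(x - μ) ^ 2 / (2 * σ ^ 2))) / lZ a μ σ

/-- The spread parameter `σ(M,r)` for which the left-truncated Gaussian on `[a, ∞)`
with `μ = r·σ + a` has mean `M`. -/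
noncomputable def sigmaMr (a M r : ℝ) : ℝ :=
  (M - a) * Real.exp (r ^ 2 / 2) * xi r /
    (r * Real.exp (r ^ 2 / 2) * xi r + Real.sqrt (2 / Real.pi))

/-- Form II of the variance of a left-truncated Gaussian on `[a, ∞)` with mean `M` and
normalized location parameter `r`. -/
noncomputable def varII (a M r : ℝ) : ℝ :=
  (M - a) ^ 2 *
      (Real.pi * Real.exp (r ^ 2) * xi r ^ 2 -
        Real.sqrt (2 * Real.pi) * r * Real.exp (r ^ 2 / 2) * xi r - 2) /
    (Real.pi * (r * Real.exp (r ^ 2 / 2) * xi r + Real.sqrt (2 / Real.pi)) ^ 2)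

/-!
Substituting `t = (x - μ) / (σ √2)` reduces the truncated Gaussian to the tail
`T(c) = ∫_c^∞ e^{-t²} dt`, with `√π/2 · ξ(r) = T(-r/√2)`, and its first moment to
`∫_c^∞ t e^{-t²} dt = e^{-c²}/2`. For `μ = rσ + a` the mean becomes
`a + σ · D(r) / (e^{r²/2} ξ(r))`, where `D(r)` is the denominator of `σ(M,r)`, so `σ(M,r)` is
precisely the solution of `mean = M`. Finally `D(r)` is a positive multiple of
`e^{-c²}/2 - c T(c) = ∫_c^∞ (t - c) e^{-t²} dt > 0` with `c = -r/√2`.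
-/

open Topology

lemma setIntegral_Ioi_pos {f : ℝ → ℝ} {c : ℝ} (hf : ∀ t ∈ Ioi c, 0 < f t)
    (hfi : IntegrableOn f (Ioi c)) : 0 < ∫ t in Ioi c, f t := by
  rw [setIntegral_pos_iff_support_of_nonneg_ae
    ((ae_restrict_mem measurableSet_Ioi).mono fun t ht => (hf t ht).le) hfi,
    inter_eq_right.mpr fun t ht => Function.mem_support.mpr (hf t ht).ne', Real.volume_Ioi]
  exact ENNReal.zero_lt_top

lemma integrable_exp_neg_sq : Integrable fun t : ℝ => exp (-t ^ 2) := by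
  simpa using integrable_exp_neg_mul_sq one_pos

lemma integrable_mul_exp_neg_sq : Integrable fun t : ℝ => t * exp (-t ^ 2) := by
  simpa using integrable_mul_exp_neg_mul_sq one_pos

lemma integral_Ioi_exp_neg_sq_pos (c : ℝ) : 0 < ∫ t in Ioi c, exp (-t ^ 2) :=
  setIntegral_Ioi_pos (fun _ _ => exp_pos _) integrable_exp_neg_sq.integrableOn

lemma integral_Ioi_mul_exp_neg_sq (c : ℝ) :
    ∫ t in Ioi c, t * exp (-t ^ 2) = exp (-c ^ 2) / 2 := by
  have hderiv (t : ℝ) : HasDerivAt (fun x => -(exp (-x ^ 2) / 2)) (t * exp (-t ^ 2)) t := by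
    refine ((hasDerivAt_pow 2 t).neg.exp.div_const 2).neg.congr_deriv ?_
    simp only [Pi.neg_apply]
    ring
  have hlim : Tendsto (fun t : ℝ => -(exp (-t ^ 2) / 2)) atTop (𝓝 0) := by
    have := ((tendsto_exp_atBot.comp (tendsto_neg_atTop_atBot.comp
      (tendsto_pow_atTop two_ne_zero))).div_const 2).neg
    simpa using this
  rw [integral_Ioi_of_hasDerivAt_of_tendsto' (fun t _ => hderiv t)
    integrable_mul_exp_neg_sq.integrableOn hlim]
  ring

lemma mul_integral_Ioi_exp_neg_sq_lt (c : ℝ) :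
    c * ∫ t in Ioi c, exp (-t ^ 2) < exp (-c ^ 2) / 2 := by
  have hint : IntegrableOn (fun t => t * exp (-t ^ 2) - c * exp (-t ^ 2)) (Ioi c) :=
    integrable_mul_exp_neg_sq.integrableOn.sub (integrable_exp_neg_sq.const_mul c).integrableOn
  have hpos := setIntegral_Ioi_pos (fun t (ht : c < t) => by
    rw [← sub_mul]; exact mul_pos (sub_pos.mpr ht) (exp_pos _)) hint
  rwa [integral_sub integrable_mul_exp_neg_sq.integrableOn
    (integrable_exp_neg_sq.const_mul c).integrableOn, integral_const_mul,
    integral_Ioi_mul_exp_neg_sq, sub_pos] at hpos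

lemma mul_xi_eq_integral_Ioi (r : ℝ) :
    √π / 2 * xi r = ∫ t in Ioi (-(r / √2)), exp (-t ^ 2) := by
  have heven : ∫ t in -(r / √2)..0, exp (-t ^ 2) = ∫ t in 0..r / √2, exp (-t ^ 2) := by
    have := intervalIntegral.integral_comp_neg (a := 0) (b := r / √2) fun t => exp (-t ^ 2)
    simp only [neg_zero, neg_sq] at this
    exact this.symm
  have hhalf : ∫ t in Ioi (0 : ℝ), exp (-t ^ 2) = √π / 2 := by
    simpa using integral_gaussian_Ioi 1
  rw [← intervalIntegral.integral_interval_add_Ioi integrable_exp_neg_sq.integrableOn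
    integrable_exp_neg_sq.integrableOn, heven, hhalf, xi, erf]
  field_simp

lemma xi_pos (r : ℝ) : 0 < xi r := by
  have := mul_xi_eq_integral_Ioi r ▸ integral_Ioi_exp_neg_sq_pos (-(r / √2))
  exact pos_of_mul_pos_right this (by positivity)

lemma mul_exp_mul_xi_add_sqrt_pos (r : ℝ) :
    0 < r * exp (r ^ 2 / 2) * xi r + √(2 / π) := by
  have hmills := mul_integral_Ioi_exp_neg_sq_lt (-(r / √2))
  rw [← mul_xi_eq_integral_Ioi, neg_sq, div_pow, sq_sqrt zero_le_two] at hmills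
  have hfactor : r * exp (r ^ 2 / 2) * xi r + √(2 / π) = 2 * √2 / √π * exp (r ^ 2 / 2) *
      (exp (-(r ^ 2 / 2)) / 2 - -(r / √2) * (√π / 2 * xi r)) := by
    rw [sqrt_div zero_le_two, exp_neg]
    field_simp
    ring
  rw [hfactor]
  exact mul_pos (by positivity) (sub_pos.mpr hmills)

lemma integral_Ioi_comp_mul_sub (g : ℝ → ℝ) (a μ : ℝ) {k : ℝ} (hk : 0 < k) :
    ∫ x in Ioi a, g (k * (x - μ)) = k⁻¹ * ∫ t in Ioi (k * (a - μ)), g t := by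
  have hshift := (measurePreserving_sub_right volume μ).setIntegral_preimage_emb
    (measurableEmbedding_subRight μ) (fun y => g (k * y)) (Ioi (a - μ))
  rw [preimage_sub_const_Ioi, sub_add_cancel] at hshift
  rw [hshift, integral_comp_mul_left_Ioi g _ hk, smul_eq_mul]

lemma exp_neg_sq_div_eq (σ y : ℝ) :
    exp (-y ^ 2 / (2 * σ ^ 2)) = exp (-((σ * √2)⁻¹ * y) ^ 2) := by
  rw [mul_pow, inv_pow, mul_pow, sq_sqrt zero_le_two, neg_div, inv_mul_eq_div, mul_comm]

lemma lZ_eq {σ : ℝ} (hσ : 0 < σ) (a μ : ℝ) :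
    lZ a μ σ = σ * √2 * ∫ t in Ioi ((σ * √2)⁻¹ * (a - μ)), exp (-t ^ 2) := by
  simp_rw [lZ, integral_Ici_eq_integral_Ioi, exp_neg_sq_div_eq σ]
  rw [integral_Ioi_comp_mul_sub (fun t => exp (-t ^ 2)) a μ (by positivity), inv_inv]

lemma lZ_pos {σ : ℝ} (hσ : 0 < σ) (a μ : ℝ) : 0 < lZ a μ σ := by
  rw [lZ_eq hσ]
  exact mul_pos (by positivity) (integral_Ioi_exp_neg_sq_pos _)

lemma integral_Ici_mul_exp_neg_sq_div_eq {σ : ℝ} (hσ : 0 < σ) (a μ : ℝ) :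
    ∫ x in Ici a, x * exp (-(x - μ) ^ 2 / (2 * σ ^ 2))
      = μ * lZ a μ σ + σ ^ 2 * exp (-(a - μ) ^ 2 / (2 * σ ^ 2)) := by
  set k := (σ * √2)⁻¹ with hk
  have hkpos : 0 < k := by positivity
  have hlin : ∫ t in Ioi (k * (a - μ)), (μ + k⁻¹ * t) * exp (-t ^ 2)
      = (μ * ∫ t in Ioi (k * (a - μ)), exp (-t ^ 2)) + k⁻¹ * (exp (-(k * (a - μ)) ^ 2) / 2) := by
    simp_rw [add_mul, mul_assoc]
    rw [integral_add (integrable_exp_neg_sq.const_mul μ).integrableOn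
      (integrable_mul_exp_neg_sq.const_mul _).integrableOn, integral_const_mul,
      integral_const_mul, integral_Ioi_mul_exp_neg_sq]
  have hcomp (x : ℝ) : x * exp (-(x - μ) ^ 2 / (2 * σ ^ 2))
      = (μ + k⁻¹ * (k * (x - μ))) * exp (-(k * (x - μ)) ^ 2) := by
    rw [exp_neg_sq_div_eq σ, ← hk, inv_mul_cancel_left₀ hkpos.ne']
    ring
  simp_rw [integral_Ici_eq_integral_Ioi, hcomp]
  rw [integral_Ioi_comp_mul_sub (fun t => (μ + k⁻¹ * t) * exp (-t ^ 2)) a μ hkpos, hlin,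
    lZ_eq hσ, exp_neg_sq_div_eq σ, hk, inv_inv]
  linear_combination (σ ^ 2 * exp (-((σ * √2)⁻¹ * (a - μ)) ^ 2) / 2) * mul_self_sqrt zero_le_two

lemma lMean_eq {σ : ℝ} (hσ : 0 < σ) (a μ : ℝ) :
    lMean a μ σ = μ + σ ^ 2 * exp (-(a - μ) ^ 2 / (2 * σ ^ 2)) / lZ a μ σ := by
  rw [lMean, integral_Ici_mul_exp_neg_sq_div_eq hσ a μ, add_div,
    mul_div_cancel_right₀ _ (lZ_pos hσ a μ).ne']

lemma lMean_mul_add_eq {σ : ℝ} (hσ : 0 < σ) (a r : ℝ) :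
    lMean a (r * σ + a) σ
      = a + σ * (r * exp (r ^ 2 / 2) * xi r + √(2 / π)) / (exp (r ^ 2 / 2) * xi r) := by
  have hc : (σ * √2)⁻¹ * (a - (r * σ + a)) = -(r / √2) := by
    field_simp
    ring
  have hexp : -(a - (r * σ + a)) ^ 2 / (2 * σ ^ 2) = -(r ^ 2 / 2) := by
    field_simp
    ring
  rw [lMean_eq hσ, lZ_eq hσ, hc, hexp, ← mul_xi_eq_integral_Ioi, exp_neg, sqrt_div zero_le_two]
  have hξ := xi_pos r
  field_simp
  linear_combination (-σ) * mul_self_sqrt zero_le_two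

/-- the denominator `r·e^{r²/2}·ξ(r) + √(2/π)` is always positive; consequently
`σ(M,r)` is a well-defined positive real, and the left-truncated Gaussian with parameters
`μ = r·σ(M,r) + a`, `σ = σ(M,r)` has mean exactly `M`. -/
theorem sigmaMr_pos_and_mean :
    (∀ r : ℝ, 0 < r * Real.exp (r ^ 2 / 2) * xi r + Real.sqrt (2 / Real.pi)) ∧
      ∀ a M r : ℝ, a < M →
        0 < sigmaMr a M r ∧ lMean a (r * sigmaMr a M r + a) (sigmaMr a M r) = M := by
  refine ⟨mul_exp_mul_xi_add_sqrt_pos, fun a M r haM => ?_⟩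
  have hD := mul_exp_mul_xi_add_sqrt_pos r
  have hξ := xi_pos r
  have hσ : 0 < sigmaMr a M r := div_pos (mul_pos (mul_pos (sub_pos.mpr haM) (exp_pos _)) hξ) hD
  refine ⟨hσ, ?_⟩
  rw [lMean_mul_add_eq hσ, sigmaMr]
  field_simp
  ring
end

section
/- Fix a ∈ ℝ and M > a. The function Var(M,r) = (M − a)²·(π·e^{r²}·ξ(r)² − √(2π)·r·e^{r²/2}·ξ(r) − 2) / (π·(r·e^{r²/2}·ξ(r) + √(2/π))²), where ξ(r) = erf(r/√2) + 1, satisfies lim_{r → −∞} Var(M,r) = (M − a)². -/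
open MeasureTheory Real Filter Set

/-!
Put `x = -r/√2`, so that `x → +∞` as `r → -∞` and `ξ(r) = erfc x`. In terms of the Mills ratio
`m(x) = exp (x²) ∫ₓ^∞ exp (-t²) dt` one has `Var(M,r) = (M - a)² (2m² + 2xm - 1) / (1 - 2xm)²`.
Numerator and denominator both vanish to order `x⁻⁴`, so the limit is read off from the
three-term expansion `m(x) = 1/(2x) - 1/(4x³) + 3/(8x⁵) + o(x⁻⁵)`. That expansion comes from
integrating over `(x, ∞)` the derivative `exp (-t²) (1 + 15/(8t⁶))` of
`-exp (-t²) (1/(2t) - 1/(4t³) + 3/(8t⁵))`, which is squeezed between `exp (-t²)` and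
`(1 + 15/(8x⁶)) exp (-t²)`.
-/

open Topology

noncomputable def gaussTail (x : ℝ) : ℝ := ∫ t in Ioi x, exp (-t ^ 2)

noncomputable def millsRatio (x : ℝ) : ℝ := exp (x ^ 2) * gaussTail x

lemma integrableOn_exp_neg_sq (s : Set ℝ) : IntegrableOn (fun t : ℝ => exp (-t ^ 2)) s := by
  simpa using (integrable_exp_neg_mul_sq one_pos).integrableOn (s := s)

lemma intervalIntegral_add_gaussTail (x : ℝ) :
    (∫ t in (0 : ℝ)..x, exp (-t ^ 2)) + gaussTail x = √π / 2 := by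
  rw [gaussTail, intervalIntegral.integral_interval_add_Ioi (integrableOn_exp_neg_sq _)
    (integrableOn_exp_neg_sq _)]
  simpa using integral_gaussian_Ioi 1

lemma erf_eq_one_sub_gaussTail (x : ℝ) : erf x = 1 - 2 / √π * gaussTail x := by
  rw [erf, ← sub_eq_of_eq_add' (intervalIntegral_add_gaussTail x).symm]
  field_simp
  ring

lemma erf_neg (x : ℝ) : erf (-x) = -erf x := by
  have h := intervalIntegral.integral_comp_neg (a := 0) (b := x) fun t => exp (-t ^ 2)
  simp only [even_two, Even.neg_pow, neg_zero] at h
  rw [erf, erf, intervalIntegral.integral_symm (-x) 0, ← h, mul_neg]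

lemma xi_neg_sqrt_two_mul (x : ℝ) : xi (-(√2 * x)) = 2 / √π * gaussTail x := by
  have h2 : √2 ≠ 0 := by positivity
  rw [xi, neg_div, mul_div_cancel_left₀ x h2, erf_neg, erf_eq_one_sub_gaussTail]
  ring

lemma varII_neg_sqrt_two_mul (a M x : ℝ) :
    varII a M (-(√2 * x)) = (M - a) ^ 2 *
      ((2 * millsRatio x ^ 2 + 2 * x * millsRatio x - 1) / (1 - 2 * x * millsRatio x) ^ 2) := by
  have h2 : √2 ^ 2 = 2 := sq_sqrt (by norm_num)
  have hπ : √π ^ 2 = π := sq_sqrt pi_pos.le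
  have hsq : (-(√2 * x)) ^ 2 = 2 * x ^ 2 := by rw [neg_sq, mul_pow, h2]
  rw [varII, xi_neg_sqrt_two_mul, hsq, sqrt_mul zero_le_two, sqrt_div zero_le_two, millsRatio,
    show 2 * x ^ 2 / 2 = x ^ 2 by ring, show 2 * x ^ 2 = x ^ 2 + x ^ 2 by ring, exp_add]
  field_simp
  rw [h2, hπ]
  ring

noncomputable def millsApprox (x : ℝ) : ℝ := 1 / (2 * x) - 1 / (4 * x ^ 3) + 3 / (8 * x ^ 5)

lemma hasDerivAt_millsApprox {t : ℝ} (ht : t ≠ 0) :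
    HasDerivAt millsApprox (-1 / (2 * t ^ 2) + 3 / (4 * t ^ 4) - 15 / (8 * t ^ 6)) t := by
  have h := (((hasDerivAt_const t (1 : ℝ)).div ((hasDerivAt_id' t).const_mul 2) (by simpa)).sub
    ((hasDerivAt_const t (1 : ℝ)).div ((hasDerivAt_pow 3 t).const_mul 4) (by simpa))).add
    ((hasDerivAt_const t (3 : ℝ)).div ((hasDerivAt_pow 5 t).const_mul 8) (by simpa))
  refine h.congr_deriv ?_
  field_simp
  ring

lemma hasDerivAt_neg_exp_neg_sq_mul_millsApprox {t : ℝ} (ht : t ≠ 0) :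
    HasDerivAt (fun t => -(exp (-t ^ 2) * millsApprox t))
      (exp (-t ^ 2) * (1 + 15 / (8 * t ^ 6))) t := by
  have hexp : HasDerivAt (fun t => exp (-t ^ 2)) (exp (-t ^ 2) * (-2 * t)) t := by
    simpa using ((hasDerivAt_pow 2 t).neg).exp
  refine ((hexp.mul (hasDerivAt_millsApprox ht)).neg).congr_deriv ?_
  rw [millsApprox]
  field_simp
  ring

lemma tendsto_millsApprox_atTop : Tendsto millsApprox atTop (𝓝 0) := by
  have h : Tendsto (fun y : ℝ => y / 2 - y ^ 3 / 4 + 3 * y ^ 5 / 8) (𝓝 0) (𝓝 0) := by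
    simpa using ((by fun_prop : Continuous fun y : ℝ => y / 2 - y ^ 3 / 4 + 3 * y ^ 5 / 8)).tendsto 0
  refine (h.comp tendsto_inv_atTop_zero).congr fun x => ?_
  simp only [Function.comp_apply, millsApprox]
  ring

lemma tendsto_neg_exp_neg_sq_mul_millsApprox :
    Tendsto (fun t => -(exp (-t ^ 2) * millsApprox t)) atTop (𝓝 0) := by
  simpa using ((tendsto_exp_atBot.comp (tendsto_neg_atTop_atBot.comp
    (tendsto_pow_atTop two_ne_zero))).mul tendsto_millsApprox_atTop).neg

lemma integrableOn_Ioi_exp_neg_sq_mul_one_add {x : ℝ} (hx : 0 < x) :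
    IntegrableOn (fun t => exp (-t ^ 2) * (1 + 15 / (8 * t ^ 6))) (Ioi x) :=
  integrableOn_Ioi_deriv_of_nonneg'
    (fun t ht => hasDerivAt_neg_exp_neg_sq_mul_millsApprox (hx.trans_le ht).ne')
    (fun t _ => by positivity) tendsto_neg_exp_neg_sq_mul_millsApprox

lemma integral_Ioi_exp_neg_sq_mul_one_add {x : ℝ} (hx : 0 < x) :
    ∫ t in Ioi x, exp (-t ^ 2) * (1 + 15 / (8 * t ^ 6)) = exp (-x ^ 2) * millsApprox x := by
  rw [integral_Ioi_of_hasDerivAt_of_nonneg'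
    (fun t ht => hasDerivAt_neg_exp_neg_sq_mul_millsApprox (hx.trans_le ht).ne')
    (fun t _ => by positivity) tendsto_neg_exp_neg_sq_mul_millsApprox]
  ring

lemma millsApprox_eq_exp_mul_integral {x : ℝ} (hx : 0 < x) :
    millsApprox x = exp (x ^ 2) * ∫ t in Ioi x, exp (-t ^ 2) * (1 + 15 / (8 * t ^ 6)) := by
  rw [integral_Ioi_exp_neg_sq_mul_one_add hx, ← mul_assoc, ← exp_add, add_neg_cancel,
    exp_zero, one_mul]

lemma millsRatio_le_millsApprox {x : ℝ} (hx : 0 < x) : millsRatio x ≤ millsApprox x := by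
  rw [millsApprox_eq_exp_mul_integral hx, millsRatio, gaussTail]
  refine mul_le_mul_of_nonneg_left (setIntegral_mono_on (integrableOn_exp_neg_sq _)
    (integrableOn_Ioi_exp_neg_sq_mul_one_add hx) measurableSet_Ioi fun t _ => ?_) (exp_nonneg _)
  exact le_mul_of_one_le_right (exp_nonneg _) (le_add_of_nonneg_right (by positivity))

lemma millsApprox_le_mul_millsRatio {x : ℝ} (hx : 0 < x) :
    millsApprox x ≤ (1 + 15 / (8 * x ^ 6)) * millsRatio x := by
  rw [millsApprox_eq_exp_mul_integral hx, millsRatio, gaussTail, mul_left_comm,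
    ← integral_const_mul (1 + 15 / (8 * x ^ 6))]
  refine mul_le_mul_of_nonneg_left (setIntegral_mono_on (integrableOn_Ioi_exp_neg_sq_mul_one_add hx)
    ((integrableOn_exp_neg_sq _).const_mul _) measurableSet_Ioi fun t ht => ?_) (exp_nonneg _)
  rw [mul_comm]
  gcongr
  exact ht.le

lemma tendsto_pow_five_mul_millsApprox_sub_millsRatio :
    Tendsto (fun x => x ^ 5 * (millsApprox x - millsRatio x)) atTop (𝓝 0) := by
  have hupper : Tendsto (fun x => 15 / 8 * (x⁻¹ * millsApprox x)) atTop (𝓝 0) := by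
    simpa using (tendsto_inv_atTop_zero.mul tendsto_millsApprox_atTop).const_mul (15 / 8 : ℝ)
  refine tendsto_of_tendsto_of_tendsto_of_le_of_le' tendsto_const_nhds hupper ?_ ?_ <;>
    filter_upwards [eventually_gt_atTop 0] with x hx
  · exact mul_nonneg (by positivity) (sub_nonneg.2 (millsRatio_le_millsApprox hx))
  · have hP := millsApprox_le_mul_millsRatio hx
    have hm := millsRatio_le_millsApprox hx
    calc x ^ 5 * (millsApprox x - millsRatio x)
        ≤ x ^ 5 * (15 / (8 * x ^ 6) * millsRatio x) := by gcongr; linarith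
      _ ≤ x ^ 5 * (15 / (8 * x ^ 6) * millsApprox x) := by gcongr
      _ = 15 / 8 * (x⁻¹ * millsApprox x) := by field_simp

/- Writing `millsRatio x = millsApprox x - c / x⁵`, the rational expressions in `x` and the Mills
ratio needed below become continuous functions of `(x⁻², c)`, and `(x⁻², c) → (0, 0)`. -/
lemma tendsto_millsExpansion {f : ℝ × ℝ → ℝ} {y : ℝ} (hf : Continuous f) (hy : f (0, 0) = y) :
    Tendsto (fun x => f ((x ^ 2)⁻¹, x ^ 5 * (millsApprox x - millsRatio x))) atTop (𝓝 y) :=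
  hy ▸ hf.continuousAt.tendsto.comp ((tendsto_pow_atTop two_ne_zero).inv_tendsto_atTop.prodMk_nhds
    tendsto_pow_five_mul_millsApprox_sub_millsRatio)

lemma tendsto_sq_mul_one_sub_two_mul_millsRatio :
    Tendsto (fun x => x ^ 2 * (1 - 2 * x * millsRatio x)) atTop (𝓝 (1 / 2)) := by
  refine (tendsto_millsExpansion (f := fun p => 1 / 2 - (3 / 4 - 2 * p.2) * p.1)
    (by fun_prop) (by norm_num)).congr' ?_
  filter_upwards [eventually_ne_atTop 0] with x hx
  simp only [millsApprox]
  field_simp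
  ring

lemma tendsto_pow_four_mul_two_mul_millsRatio_sq_add_sub_one :
    Tendsto (fun x => x ^ 4 * (2 * millsRatio x ^ 2 + 2 * x * millsRatio x - 1)) atTop
      (𝓝 (1 / 4)) := by
  refine (tendsto_millsExpansion (f := fun p => (1 / 4 - 2 * p.2) + (7 / 8 - 2 * p.2) * p.1
      - (3 / 8 - p.2) * p.1 ^ 2 + 2 * (3 / 8 - p.2) ^ 2 * p.1 ^ 3)
    (by fun_prop) (by norm_num)).congr' ?_
  filter_upwards [eventually_ne_atTop 0] with x hx
  simp only [millsApprox]
  field_simp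
  ring

lemma tendsto_millsRatio_varianceFactor :
    Tendsto (fun x => (2 * millsRatio x ^ 2 + 2 * x * millsRatio x - 1) /
      (1 - 2 * x * millsRatio x) ^ 2) atTop (𝓝 1) := by
  have h := tendsto_pow_four_mul_two_mul_millsRatio_sq_add_sub_one.div
    (tendsto_sq_mul_one_sub_two_mul_millsRatio.pow 2) (by norm_num)
  rw [show (1 / 4 : ℝ) / (1 / 2) ^ 2 = 1 by norm_num] at h
  refine h.congr' ?_
  filter_upwards [eventually_ne_atTop 0] with x hx
  rw [Pi.div_apply, mul_pow, ← pow_mul, mul_div_mul_left _ _ (by positivity)]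

theorem tendsto_varII_atBot_general (a M : ℝ) :
    Filter.Tendsto (fun r : ℝ => varII a M r) Filter.atBot (nhds ((M - a) ^ 2)) := by
  have hx : Tendsto (fun r : ℝ => -r / √2) atBot atTop :=
    tendsto_neg_atBot_atTop.atTop_div_const (by positivity)
  have h := (tendsto_millsRatio_varianceFactor.comp hx).const_mul ((M - a) ^ 2)
  rw [mul_one] at h
  refine h.congr fun r => ?_
  rw [Function.comp_apply, ← varII_neg_sqrt_two_mul, mul_div_cancel₀ _ (by positivity), neg_neg]

/-- `Var(M,r) → (M − a)²` as `r → −∞`. -/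
theorem tendsto_varII_atBot (a M : ℝ) (hM : a < M) :
    Filter.Tendsto (fun r : ℝ => varII a M r) Filter.atBot (nhds ((M - a) ^ 2)) :=
  tendsto_varII_atBot_general a M
end
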